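/- arXiv:1005.4162 — 10 statements merged into one kernel-verified Lean document; each statement's English description precedes it below -/
import Mathlib

section
/- If a = (a_n) and b = (b_n) are sequences of positive integers with a_0 = b_0 = 0, a_1 = 1, a increasing, a and b complementary (their ranges partition the positive integers), and b is b_1-superadditive (i.e., b_m + b_n ≤ b_{m+n} < b_m + b_n + b_1 for all m, n ≥ 0), then b_{n+1} - b_n ≥ b_1 ≥ 2 for all n ≥ 0. -/
theorem stmt_0 (a b : ℕ → ℕ)
    (ha0 : a 0 = 0) (hb0 : b 0 = 0) (ha1 : a 1 = 1)
    (hainc : StrictMono a)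
    (hbpos : ∀ n, 1 ≤ n → 1 ≤ b n)
    (hcomp : ∀ k : ℕ, 1 ≤ k → ((∃ n, 1 ≤ n ∧ a n = k) ↔ ¬ ∃ n, 1 ≤ n ∧ b n = k))
    (hsup : ∀ m n : ℕ, b m + b n ≤ b (m + n) ∧ b (m + n) < b m + b n + b 1) :
    (∀ n : ℕ, b n + b 1 ≤ b (n + 1)) ∧ 2 ≤ b 1 := by
  constructor
  · intro n; exact (hsup n 1).1
  · have h1 : ¬ ∃ n, 1 ≤ n ∧ b n = 1 := (hcomp 1 le_rfl).mp ⟨1, le_rfl, ha1⟩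
    have := hbpos 1 le_rfl
    by_contra h
    exact h1 ⟨1, le_rfl, by omega⟩
end

section
/- If the pair of sequences (a_n), (b_n) is b_1-SAC (a_1 = 1, complementary, a increasing, b b_1-superadditive, a_0 = b_0 = 0), then a_{n+1} - a_n ∈ {1, 2} for all n ≥ 0. -/
theorem stmt_1 (a b : ℕ → ℕ)
    (ha0 : a 0 = 0) (hb0 : b 0 = 0) (ha1 : a 1 = 1)
    (hainc : StrictMono a)
    (hbpos : ∀ n, 1 ≤ n → 1 ≤ b n)
    (hcomp : ∀ k : ℕ, 1 ≤ k → ((∃ n, 1 ≤ n ∧ a n = k) ↔ ¬ ∃ n, 1 ≤ n ∧ b n = k))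
    (hsup : ∀ m n : ℕ, b m + b n ≤ b (m + n) ∧ b (m + n) < b m + b n + b 1) :
    ∀ n : ℕ, a (n + 1) = a n + 1 ∨ a (n + 1) = a n + 2 := by
  have hb1 : 2 ≤ b 1 := by
    rcases Nat.lt_or_ge (b 1) 2 with h | h
    · exfalso
      have hb11 : b 1 = 1 := le_antisymm (by omega) (hbpos 1 le_rfl)
      exact (hcomp 1 le_rfl).mp ⟨1, le_rfl, ha1⟩ ⟨1, le_rfl, hb11⟩
    · exact h
  have hbmono : ∀ i j : ℕ, i ≤ j → b i ≤ b j := by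
    intro i j hij
    obtain ⟨d, rfl⟩ := Nat.exists_eq_add_of_le hij
    have := (hsup i d).1
    omega
  have hbgap : ∀ i j : ℕ, i < j → b i + 2 ≤ b j := by
    intro i j hij
    have h1 : b (i + 1) ≤ b j := hbmono _ _ hij
    have := (hsup i 1).1
    omega
  intro n
  have hlow : a n + 1 ≤ a (n + 1) := hainc (Nat.lt_succ_self n)
  rcases Nat.lt_or_ge (a n + 2) (a (n + 1)) with h | h
  · exfalso
    have key : ∀ k, a n < k → k < a (n + 1) → ∃ m, 1 ≤ m ∧ b m = k := by
      intro k hk1 hk2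
      have hk0 : 1 ≤ k := by omega
      by_contra hnb
      obtain ⟨m, hm1, hm2⟩ := (hcomp k hk0).mpr hnb
      rcases Nat.lt_or_ge n m with hm | hm
      · have : a (n + 1) ≤ a m := hainc.monotone hm
        omega
      · have : a m ≤ a n := hainc.monotone hm
        omega
    obtain ⟨i, hi1, hi2⟩ := key (a n + 1) (by omega) (by omega)
    obtain ⟨j, hj1, hj2⟩ := key (a n + 2) (by omega) (by omega)
    have hij : i < j := by
      by_contra hle
      have := hbmono j i (by omega)
      omega
    have := hbgap i j hij
    omega
  · omega
end

section
/- If the pair of sequences (a_n), (b_n) is b_1-SAC, then a_n < b_n for all n ≥ 1, and the sequence (b_n - a_n) is non-decreasing. -/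
theorem stmt_2 (a b : ℕ → ℕ)
    (ha0 : a 0 = 0) (hb0 : b 0 = 0) (ha1 : a 1 = 1)
    (hainc : StrictMono a)
    (hbpos : ∀ n, 1 ≤ n → 1 ≤ b n)
    (hcomp : ∀ k : ℕ, 1 ≤ k → ((∃ n, 1 ≤ n ∧ a n = k) ↔ ¬ ∃ n, 1 ≤ n ∧ b n = k))
    (hsup : ∀ m n : ℕ, b m + b n ≤ b (m + n) ∧ b (m + n) < b m + b n + b 1) :
    (∀ n, 1 ≤ n → a n < b n) ∧ (∀ m n : ℕ, m ≤ n → b m - a m ≤ b n - a n) := by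
  have hb1 : 2 ≤ b 1 := by
    have h := (hcomp 1 le_rfl).mp ⟨1, le_rfl, ha1⟩
    have := hbpos 1 le_rfl
    by_contra h2
    exact h ⟨1, le_rfl, by omega⟩
  have hstep : ∀ n, b n + b 1 ≤ b (n + 1) := fun n => (hsup n 1).1
  have hbmono : StrictMono b := strictMono_nat_of_lt_succ (fun n => by have := hstep n; omega)
  have hgap : ∀ p q : ℕ, p < q → b p + b 1 ≤ b q := by
    intro p q h
    calc b p + b 1 ≤ b (p + 1) := hstep p
    _ ≤ b q := hbmono.monotone h
  have hagap : ∀ n, a (n + 1) ≤ a n + 2 := by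
    intro n
    by_contra h
    push_neg at h
    have hnota : ∀ k, a n < k → k < a (n + 1) → ¬ ∃ m, 1 ≤ m ∧ a m = k := by
      rintro k hk1 hk2 ⟨m, hm, rfl⟩
      rcases le_or_gt m n with h' | h'
      · exact absurd (hainc.monotone h') (by omega)
      · exact absurd (hainc.monotone (show n + 1 ≤ m by omega)) (by omega)
    obtain ⟨i, hi, hbi⟩ := not_not.mp
      (mt (hcomp (a n + 1) (by omega)).mpr (hnota _ (by omega) (by omega)))
    obtain ⟨j, hj, hbj⟩ := not_not.mp
      (mt (hcomp (a n + 2) (by omega)).mpr (hnota _ (by omega) (by omega)))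
    rcases lt_trichotomy i j with h' | h' | h'
    · have := hgap i j h'; omega
    · subst h'; omega
    · have := hgap j i h'; omega
  have hbn : ∀ n, n * b 1 ≤ b n := by
    intro n
    induction n with
    | zero => simp [hb0]
    | succ k ih => have := hstep k; nlinarith
  have haub : ∀ n, a (n + 1) ≤ 2 * n + 1 := by
    intro n
    induction n with
    | zero => simpa using ha1.le
    | succ k ih => have := hagap (k + 1); omega
  have hab : ∀ n, 1 ≤ n → a n < b n := by
    intro n hn
    obtain ⟨k, rfl⟩ := Nat.exists_eq_add_of_le hn
    have h1 : a (1 + k) ≤ 2 * k + 1 := by rw [add_comm]; exact haub k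
    have h2 := hbn (1 + k)
    nlinarith
  refine ⟨hab, ?_⟩
  have hle : ∀ n, a n ≤ b n := by
    intro n
    rcases Nat.eq_zero_or_pos n with rfl | h
    · omega
    · exact (hab n h).le
  exact fun m n h => monotone_nat_of_le_succ (f := fun n => b n - a n)
    (fun k => by
      have := hle k; have := hle (k + 1); have := hagap k; have := hstep k
      omega) h
end

section
/- If the pair of sequences (a_n), (b_n) is b_1-SAC, then for all m, n ∈ ℕ: a_m + a_n - 1 ≤ a_{m+n} ≤ a_m + a_n + 1. -/
namespace Stmt3Aux

/-- number of terms of `f` (with index ≥ 1) that are ≤ x, for `f` strictly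
increasing with `f 0 = 0`. -/
def cnt (f : ℕ → ℕ) (x : ℕ) : ℕ := Nat.findGreatest (fun p => f p ≤ x) x

lemma cnt_spec {f : ℕ → ℕ} (hf0 : f 0 = 0) (x : ℕ) : f (cnt f x) ≤ x := by
  exact Nat.findGreatest_spec (P := fun p => f p ≤ x) (Nat.zero_le x) (by simp [hf0])

lemma le_cnt {f : ℕ → ℕ} (hf : ∀ n, n ≤ f n) {n x : ℕ} (h : f n ≤ x) : n ≤ cnt f x :=
  Nat.le_findGreatest (le_trans (hf n) h) h

lemma cnt_lt {f : ℕ → ℕ} (hf : ∀ n, n ≤ f n) (x : ℕ) : x < f (cnt f x + 1) := by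
  by_contra h
  push_neg at h
  have := le_cnt hf h
  omega

lemma cnt_eq {f : ℕ → ℕ} (hmono : StrictMono f) (hf0 : f 0 = 0) (hf : ∀ n, n ≤ f n) (m : ℕ) :
    cnt f (f m) = m := by
  have h1 : m ≤ cnt f (f m) := le_cnt hf le_rfl
  have h2 : f (cnt f (f m)) ≤ f m := cnt_spec hf0 (f m)
  have := hmono.le_iff_le.mp h2
  omega

lemma partition_count {a b : ℕ → ℕ} (hainc : StrictMono a) (hbinc : StrictMono b)
    (ha0 : a 0 = 0) (hb0 : b 0 = 0) (ha : ∀ n, n ≤ a n) (hb : ∀ n, n ≤ b n)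
    (hcomp : ∀ k : ℕ, 1 ≤ k → ((∃ n, 1 ≤ n ∧ a n = k) ↔ ¬ ∃ n, 1 ≤ n ∧ b n = k))
    (x : ℕ) : cnt a x + cnt b x = x := by
  classical
  have key : Finset.Icc 1 x =
      (Finset.Icc 1 (cnt a x)).image a ∪ (Finset.Icc 1 (cnt b x)).image b := by
    ext k
    simp only [Finset.mem_union, Finset.mem_image, Finset.mem_Icc]
    constructor
    · rintro ⟨hk1, hkx⟩
      by_cases h : ∃ n, 1 ≤ n ∧ b n = k
      · obtain ⟨n, hn1, hnk⟩ := h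
        exact Or.inr ⟨n, ⟨hn1, le_cnt hb (hnk ▸ hkx)⟩, hnk⟩
      · obtain ⟨n, hn1, hnk⟩ := (hcomp k hk1).mpr h
        exact Or.inl ⟨n, ⟨hn1, le_cnt ha (hnk ▸ hkx)⟩, hnk⟩
    · rintro (⟨n, ⟨hn1, hn2⟩, rfl⟩ | ⟨n, ⟨hn1, hn2⟩, rfl⟩)
      · exact ⟨le_trans hn1 (ha n), le_trans (hainc.monotone hn2) (cnt_spec ha0 x)⟩
      · exact ⟨le_trans hn1 (hb n), le_trans (hbinc.monotone hn2) (cnt_spec hb0 x)⟩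
  have hdisj : Disjoint ((Finset.Icc 1 (cnt a x)).image a)
      ((Finset.Icc 1 (cnt b x)).image b) := by
    rw [Finset.disjoint_left]
    rintro k hka hkb
    simp only [Finset.mem_image, Finset.mem_Icc] at hka hkb
    obtain ⟨n, ⟨hn1, _⟩, hnk⟩ := hka
    obtain ⟨n', ⟨hn'1, _⟩, hn'k⟩ := hkb
    have hk1 : 1 ≤ k := hnk ▸ le_trans hn1 (ha n)
    exact ((hcomp k hk1).mp ⟨n, hn1, hnk⟩) ⟨n', hn'1, hn'k⟩
  have hcard := Finset.card_union_of_disjoint hdisj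
  rw [← key] at hcard
  rw [Finset.card_image_of_injective _ hainc.injective,
      Finset.card_image_of_injective _ hbinc.injective] at hcard
  simp [Nat.card_Icc] at hcard
  omega

/-- The lower bound, in the case `1 ≤ cnt b (a m)`. -/
lemma lower_aux {a b : ℕ → ℕ} (hainc : StrictMono a) (hbinc : StrictMono b)
    (ha0 : a 0 = 0) (hb0 : b 0 = 0) (ha : ∀ n, n ≤ a n) (hb : ∀ n, n ≤ b n)
    (hcomp : ∀ k : ℕ, 1 ≤ k → ((∃ n, 1 ≤ n ∧ a n = k) ↔ ¬ ∃ n, 1 ≤ n ∧ b n = k))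
    (hsup : ∀ m n : ℕ, b m + b n ≤ b (m + n) ∧ b (m + n) < b m + b n + b 1)
    (m n : ℕ) (hp : 1 ≤ cnt b (a m)) : a m + a n ≤ a (m + n) + 1 := by
  have hcount := partition_count hainc hbinc ha0 hb0 ha hb hcomp
  have ham : a m = m + cnt b (a m) := by
    have h1 := hcount (a m)
    have h2 : cnt a (a m) = m := cnt_eq hainc ha0 ha m
    omega
  have han : a n = n + cnt b (a n) := by
    have h1 := hcount (a n)
    have h2 : cnt a (a n) = n := cnt_eq hainc ha0 ha n
    omega
  obtain ⟨p', hp'⟩ : ∃ p', cnt b (a m) = p' + 1 := ⟨cnt b (a m) - 1, by omega⟩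
  set p := cnt b (a m) with hpdef
  set q := cnt b (a n) with hqdef
  have hbp : b p ≤ a m := cnt_spec hb0 (a m)
  have hbq : b q ≤ a n := cnt_spec hb0 (a n)
  -- m ≥ 1
  have hm1 : 1 ≤ m := by
    by_contra h
    have hm0 : m = 0 := by omega
    have : p ≤ b p := hb p
    rw [hm0, ha0] at hbp
    omega
  -- b p ≠ a m since a m is in range of a, b p in range of b
  have hbpam : b p + 1 ≤ a m := by
    have ham1 : 1 ≤ a m := le_trans hm1 (ha m)
    have hnot : ¬ ∃ n, 1 ≤ n ∧ b n = a m := (hcomp (a m) ham1).mp ⟨m, hm1, rfl⟩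
    have hne : b p ≠ a m := fun h => hnot ⟨p, by omega, h⟩
    omega
  -- b (p' + q) ≤ a m + a n - 2
  have h3 := (hsup (p' + q) 1).1
  have h4 := (hsup (p' + 1) q).2
  have e1 : p' + q + 1 = p' + 1 + q := by ring
  rw [e1] at h3
  have hb1 : 1 ≤ b 1 := hb 1
  have hbpq : b (p' + q) + 2 ≤ a m + a n := by
    have : b (p' + 1) = b p := by rw [hp']
    omega
  set x := a m + a n - 2 with hxdef
  have hbx : b (p' + q) ≤ x := by omega
  have hBx : p' + q ≤ cnt b x := le_cnt hb hbx
  have hcx := hcount x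
  have hax : ¬ (a (m + n) ≤ x) := by
    intro h
    have : m + n ≤ cnt a x := le_cnt ha h
    omega
  omega

end Stmt3Aux

theorem stmt_3 (a b : ℕ → ℕ)
    (ha0 : a 0 = 0) (hb0 : b 0 = 0) (ha1 : a 1 = 1)
    (hainc : StrictMono a)
    (hbpos : ∀ n, 1 ≤ n → 1 ≤ b n)
    (hcomp : ∀ k : ℕ, 1 ≤ k → ((∃ n, 1 ≤ n ∧ a n = k) ↔ ¬ ∃ n, 1 ≤ n ∧ b n = k))
    (hsup : ∀ m n : ℕ, b m + b n ≤ b (m + n) ∧ b (m + n) < b m + b n + b 1) :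
    ∀ m n : ℕ, a m + a n ≤ a (m + n) + 1 ∧ a (m + n) ≤ a m + a n + 1 := by
  intro m n
  open Stmt3Aux in
  have hb1 : 1 ≤ b 1 := hbpos 1 le_rfl
  have hbinc : StrictMono b := strictMono_nat_of_lt_succ (fun k => by
    have := (hsup k 1).1
    omega)
  have hble : ∀ k, k ≤ b k := fun k => hbinc.le_apply
  have hale : ∀ k, k ≤ a k := fun k => hainc.le_apply
  have hcount := Stmt3Aux.partition_count hainc hbinc ha0 hb0 hale hble hcomp
  have ham : a m = m + Stmt3Aux.cnt b (a m) := by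
    have h1 := hcount (a m)
    have h2 := Stmt3Aux.cnt_eq hainc ha0 hale m
    omega
  have han : a n = n + Stmt3Aux.cnt b (a n) := by
    have h1 := hcount (a n)
    have h2 := Stmt3Aux.cnt_eq hainc ha0 hale n
    omega
  set p := Stmt3Aux.cnt b (a m) with hpdef
  set q := Stmt3Aux.cnt b (a n) with hqdef
  constructor
  · -- lower bound: a m + a n ≤ a (m+n) + 1
    by_cases hpq : p = 0 ∧ q = 0
    · have := hale (m + n)
      omega
    · by_cases hp : 1 ≤ p
      · exact Stmt3Aux.lower_aux hainc hbinc ha0 hb0 hale hble hcomp hsup m n hp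
      · have hq : 1 ≤ q := by omega
        have := Stmt3Aux.lower_aux hainc hbinc ha0 hb0 hale hble hcomp hsup n m hq
        have e : n + m = m + n := by ring
        rw [e] at this
        omega
  · -- upper bound: a (m+n) ≤ a m + a n + 1
    have k1 : a m < b (p + 1) := Stmt3Aux.cnt_lt hble (a m)
    have k2 : a n < b (q + 1) := Stmt3Aux.cnt_lt hble (a n)
    have k3 := (hsup (p + 1) (q + 1)).1
    have e : p + 1 + (q + 1) = p + q + 2 := by ring
    rw [e] at k3
    set x := a m + a n + 1 with hxdef
    have hBx : Stmt3Aux.cnt b x ≤ p + q + 1 := by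
      by_contra h
      push_neg at h
      have h1 : b (p + q + 2) ≤ b (Stmt3Aux.cnt b x) := hbinc.monotone (by omega)
      have h2 : b (Stmt3Aux.cnt b x) ≤ x := Stmt3Aux.cnt_spec hb0 x
      omega
    have hAx : m + n ≤ Stmt3Aux.cnt a x := by
      have := hcount x
      omega
    have h5 : a (m + n) ≤ a (Stmt3Aux.cnt a x) := hainc.monotone hAx
    have h6 : a (Stmt3Aux.cnt a x) ≤ x := Stmt3Aux.cnt_spec ha0 x
    omega
end

section
/- Let (a_n)_{n≥1}, (b_n)_{n≥1} be increasing sequences of positive integers with a_n < b_n, and G the invariant subtraction game with moves {(a_n, b_n), (b_n, a_n) : n ≥ 1}. If k = a_n and l ≥ b_n for some n ≥ 1 with k, l > 0, then (k, l) is an N-position of G. -/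
/-- P-positions of the invariant two-pile subtraction game with move set `M`:
a position is P iff every option is an N-position. -/
def PPos2 (M : Set (ℕ × ℕ)) (x : ℕ × ℕ) : Prop :=
  ∀ r : ℕ × ℕ, r ∈ M → r ≠ (0, 0) → r.1 ≤ x.1 → r.2 ≤ x.2 →
    ¬ PPos2 M (x.1 - r.1, x.2 - r.2)
termination_by x.1 + x.2
decreasing_by
  rename_i h1 h2
  simp only [ne_eq, Prod.ext_iff, not_and_or] at *
  omega

theorem stmt_10 (a b : ℕ → ℕ)
    (hapos : ∀ n, 1 ≤ n → 1 ≤ a n) (hbpos : ∀ n, 1 ≤ n → 1 ≤ b n)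
    (hainc : ∀ m n, 1 ≤ m → m < n → a m < a n)
    (hbinc : ∀ m n, 1 ≤ m → m < n → b m < b n)
    (hab : ∀ n, 1 ≤ n → a n < b n) :
    ∀ n l : ℕ, 1 ≤ n → b n ≤ l →
      ¬ PPos2 {p | ∃ n, 1 ≤ n ∧ (p = (a n, b n) ∨ p = (b n, a n))} (a n, l) := by
  intro n l hn hl hP
  rw [PPos2] at hP
  refine hP (a n, b n) ⟨n, hn, Or.inl rfl⟩ ?_ le_rfl hl ?_
  · intro h
    have := hapos n hn
    simp [Prod.ext_iff] at h
    omega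
  · rw [PPos2]
    intro r hr hne h1 h2
    obtain ⟨k, hk, hrk⟩ := hr
    have := hapos k hk
    have := hbpos k hk
    simp at h1
    rcases hrk with h | h <;> simp [h] at h1 ⊢ <;> omega
end

section
/- Suppose (a_n), (b_n) is a b_1-SAC pair (a_0 = b_0 = 0, a_1 = 1, a increasing, a and b complementary, b b_1-superadditive). Let G be the invariant game with moves M(G) = {(a_n, b_n), (b_n, a_n) : n ≥ 1}, and let G⋆ be the invariant game whose moves are the nonzero P-positions of G. Then the P-positions of G⋆ are exactly {(a_n, b_n), (b_n, a_n) : n ≥ 0}. -/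
structure SAC (a b : ℕ → ℕ) : Prop where
  ha0 : a 0 = 0
  hb0 : b 0 = 0
  ha1 : a 1 = 1
  hainc : StrictMono a
  hbpos : ∀ n, 1 ≤ n → 1 ≤ b n
  hcomp : ∀ k : ℕ, 1 ≤ k → ((∃ n, 1 ≤ n ∧ a n = k) ↔ ¬ ∃ n, 1 ≤ n ∧ b n = k)
  hsup : ∀ m n : ℕ, b m + b n ≤ b (m + n) ∧ b (m + n) < b m + b n + b 1

namespace SAC

variable {a b : ℕ → ℕ} (h : SAC a b)
include h

theorem b1_ge : 2 ≤ b 1 := by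
  have h1 := (h.hcomp 1 le_rfl).mp ⟨1, le_rfl, h.ha1⟩
  have := h.hbpos 1 le_rfl
  rcases Nat.lt_or_ge (b 1) 2 with hlt | hge
  · exact absurd ⟨1, le_rfl, by omega⟩ h1
  · exact hge

theorem bmono : StrictMono b := by
  apply strictMono_nat_of_lt_succ
  intro n
  have := (h.hsup n 1).1
  have := h.b1_ge
  omega

theorem b_ge (n : ℕ) : 2 * n ≤ b n := by
  induction n with
  | zero => omega
  | succ k ih =>
    have := (h.hsup k 1).1
    have := h.b1_ge
    omega

theorem a_ge (n : ℕ) : n ≤ a n := h.hainc.le_apply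

theorem apos (n : ℕ) (hn : 1 ≤ n) : 1 ≤ a n := le_trans hn (h.a_ge n)

theorem cover (k : ℕ) (hk : 1 ≤ k) :
    (∃ j, 1 ≤ j ∧ a j = k) ∨ (∃ j, 1 ≤ j ∧ b j = k) := by
  by_cases hA : ∃ j, 1 ≤ j ∧ a j = k
  · exact Or.inl hA
  · right
    by_contra hB
    exact hA ((h.hcomp k hk).mpr hB)

theorem a_ne_b (j t : ℕ) (hj : 1 ≤ j) (ht : 1 ≤ t) : a j ≠ b t := by
  intro heq
  have h1 : 1 ≤ a j := h.apos j hj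
  have := (h.hcomp (a j) h1).mp ⟨j, hj, rfl⟩
  exact this ⟨t, ht, heq.symm⟩

theorem a_gap (n : ℕ) : a (n + 1) ≤ a n + 2 := by
  rcases h.cover (a n + 1) (by omega) with ⟨j, hj, hja⟩ | ⟨t, ht, htb⟩
  · -- a n + 1 is an a-value
    have hnj : n < j := by
      have : a n < a j := by omega
      exact (h.hainc.lt_iff_lt).mp this
    calc a (n+1) ≤ a j := h.hainc.monotone hnj
    _ = a n + 1 := hja
    _ ≤ a n + 2 := by omega
  · rcases h.cover (a n + 2) (by omega) with ⟨j, hj, hja⟩ | ⟨s, hs, hsb⟩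
    · have hnj : n < j := by
        have : a n < a j := by omega
        exact (h.hainc.lt_iff_lt).mp this
      calc a (n+1) ≤ a j := h.hainc.monotone hnj
      _ = a n + 2 := hja
    · exfalso
      have hst : t < s := (h.bmono.lt_iff_lt).mp (by omega)
      have : b t + b 1 ≤ b s := by
        have := (h.hsup t (s - t)).1
        have hb : b (s - t) ≥ b 1 := h.bmono.monotone (by omega)
        have : b t + b (s-t) ≤ b (t + (s-t)) := (h.hsup t (s-t)).1
        have heq : t + (s - t) = s := by omega
        rw [heq] at this
        omega
      have := h.b1_ge
      omega

theorem a_lt (n : ℕ) (hn : 1 ≤ n) : a n < 2 * n := by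
  induction n with
  | zero => omega
  | succ k ih =>
    rcases Nat.eq_or_lt_of_le hn with he | hl
    · have : k = 0 := by omega
      subst this; rw [h.ha1]; omega
    · have := ih (by omega)
      have := h.a_gap k
      omega

theorem ab_lt (n : ℕ) (hn : 1 ≤ n) : a n < b n :=
  lt_of_lt_of_le (h.a_lt n hn) (h.b_ge n)

end SAC

/-- number of indices `j ∈ [1,x]` with `f j ≤ x`. -/
def cnt (f : ℕ → ℕ) (x : ℕ) : ℕ := ((Finset.Icc 1 x).filter (fun j => f j ≤ x)).card

theorem cnt_le_iff (f : ℕ → ℕ) (hf : StrictMono f) (x j : ℕ) (hj : 1 ≤ j) :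
    j ≤ cnt f x ↔ f j ≤ x := by
  constructor
  · intro hle
    by_contra hgt
    push_neg at hgt
    have hsub : (Finset.Icc 1 x).filter (fun i => f i ≤ x) ⊆ Finset.Icc 1 (j - 1) := by
      intro i hi
      simp only [Finset.mem_filter, Finset.mem_Icc] at hi ⊢
      have : f i < f j := by omega
      have : i < j := (hf.lt_iff_lt).mp this
      omega
    have := Finset.card_le_card hsub
    rw [Nat.card_Icc] at this
    unfold cnt at hle
    omega
  · intro hfx
    have hsub : Finset.Icc 1 j ⊆ (Finset.Icc 1 x).filter (fun i => f i ≤ x) := by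
      intro i hi
      simp only [Finset.mem_Icc] at hi
      simp only [Finset.mem_filter, Finset.mem_Icc]
      have h1 : f i ≤ f j := hf.monotone hi.2
      have h2 : i ≤ f i := hf.le_apply
      omega
    have := Finset.card_le_card hsub
    rw [Nat.card_Icc] at this
    unfold cnt
    omega

namespace SAC
variable {a b : ℕ → ℕ} (h : SAC a b)
include h

theorem cnt_add (x : ℕ) : cnt a x + cnt b x = x := by
  classical
  have hA : cnt a x = ((Finset.Icc 1 x).filter (fun k => ∃ j, 1 ≤ j ∧ a j = k)).card := by
    apply Finset.card_bij (fun j _ => a j)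
    · intro j hj
      simp only [Finset.mem_filter, Finset.mem_Icc] at hj ⊢
      exact ⟨⟨h.apos j hj.1.1, hj.2⟩, j, hj.1.1, rfl⟩
    · intro i hi j hj hij
      exact h.hainc.injective hij
    · intro k hk
      simp only [Finset.mem_filter, Finset.mem_Icc] at hk
      obtain ⟨⟨hk1, hk2⟩, j, hj1, hj2⟩ := hk
      refine ⟨j, ?_, hj2⟩
      simp only [Finset.mem_filter, Finset.mem_Icc]
      have := h.a_ge j
      omega
  have hB : cnt b x = ((Finset.Icc 1 x).filter (fun k => ∃ j, 1 ≤ j ∧ b j = k)).card := by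
    apply Finset.card_bij (fun j _ => b j)
    · intro j hj
      simp only [Finset.mem_filter, Finset.mem_Icc] at hj ⊢
      exact ⟨⟨h.hbpos j hj.1.1, hj.2⟩, j, hj.1.1, rfl⟩
    · intro i hi j hj hij
      exact h.bmono.injective hij
    · intro k hk
      simp only [Finset.mem_filter, Finset.mem_Icc] at hk
      obtain ⟨⟨hk1, hk2⟩, j, hj1, hj2⟩ := hk
      refine ⟨j, ?_, hj2⟩
      simp only [Finset.mem_filter, Finset.mem_Icc]
      have : j ≤ b j := h.bmono.le_apply
      omega
  rw [hA, hB]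
  have hneg : (Finset.Icc 1 x).filter (fun k => ∃ j, 1 ≤ j ∧ b j = k)
      = (Finset.Icc 1 x).filter (fun k => ¬ ∃ j, 1 ≤ j ∧ a j = k) := by
    apply Finset.filter_congr
    intro k hk
    simp only [Finset.mem_Icc] at hk
    have := h.hcomp k hk.1
    constructor
    · intro hb ha; exact (this.mp ha) hb
    · intro hna; by_contra hb; exact hna ((this.mpr) hb)
  rw [hneg, Finset.card_filter_add_card_filter_not]
  simp

theorem cnt_a_self (n : ℕ) : cnt a (a n) = n := by
  rcases Nat.eq_zero_or_pos n with h0 | hpos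
  · subst h0
    rw [h.ha0]
    unfold cnt
    simp
  · apply le_antisymm
    · by_contra hgt
      push_neg at hgt
      have := (cnt_le_iff a h.hainc (a n) (n+1) (by omega)).mp (by omega)
      have := h.hainc (show n < n + 1 by omega)
      omega
    · exact (cnt_le_iff a h.hainc (a n) n hpos).mpr le_rfl

theorem cnt_a_pred (n : ℕ) (hn : 1 ≤ n) : cnt a (a n - 1) + 1 = n := by
  have han : 1 ≤ a n := h.apos n hn
  apply le_antisymm
  · by_contra hgt
    push_neg at hgt
    have := (cnt_le_iff a h.hainc (a n - 1) n hn).mp (by omega)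
    omega
  · rcases Nat.eq_or_lt_of_le hn with he | hl
    · omega
    · have h1 : a (n-1) ≤ a n - 1 := by
        have : a (n-1) < a n := h.hainc (by omega)
        omega
      have := (cnt_le_iff a h.hainc (a n - 1) (n-1) (by omega)).mpr h1
      omega

theorem cnt_b_shift (x t : ℕ) : cnt b (x + b t) ≤ cnt b x + t := by
  by_contra hgt
  push_neg at hgt
  set s := cnt b (x + b t) with hs
  have hs1 : 1 ≤ s := by omega
  have hbs : b s ≤ x + b t := (cnt_le_iff b h.bmono (x + b t) s hs1).mp le_rfl
  have hst : t + 1 ≤ s := by omega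
  have hgtx : x < b (s - t) := by
    by_contra hle
    push_neg at hle
    have := (cnt_le_iff b h.bmono x (s - t) (by omega)).mpr hle
    omega
  have hsup1 : b (s - t) + b t ≤ b ((s-t) + t) := (h.hsup (s-t) t).1
  have heq : (s - t) + t = s := by omega
  rw [heq] at hsup1
  omega

theorem a_superadd_up (n k : ℕ) (hn : 1 ≤ n) (hk : 1 ≤ k) :
    a (n + k) + 1 ≤ a n + a k + b 1 := by
  have hb1 := h.b1_ge
  set x := a n + a k + (b 1 - 1) with hx
  have key : n + k ≤ cnt a x := by
    have hsum := h.cnt_add x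
    -- show cnt b x + (n+k) ≤ x
    by_contra hlt
    push_neg at hlt
    have hcb : cnt b x + (n + k) + 1 > x + 1 := by omega
    set p := cnt b (a n) + 1 with hp
    set q := cnt b (a k) + 1 with hq
    have hcban : cnt b (a n) + n = a n := by
      have := h.cnt_add (a n); rw [h.cnt_a_self n] at this; omega
    have hcbak : cnt b (a k) + k = a k := by
      have := h.cnt_add (a k); rw [h.cnt_a_self k] at this; omega
    have hspqr : p + q + (b 1 - 2) ≤ cnt b x := by omega
    have hbx : b (cnt b x) ≤ x := (cnt_le_iff b h.bmono x (cnt b x) (by omega)).mp le_rfl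
    have h1 : b p + b (q + (b 1 - 2)) ≤ b (p + (q + (b 1 - 2))) := (h.hsup p _).1
    have h2 : b q + b (b 1 - 2) ≤ b (q + (b 1 - 2)) := (h.hsup q _).1
    have h3 : b (p + (q + (b 1 - 2))) ≤ b (cnt b x) := h.bmono.monotone (by omega)
    have hbp : a n < b p := by
      by_contra hle
      push_neg at hle
      have := (cnt_le_iff b h.bmono (a n) p (by omega)).mpr hle
      omega
    have hbq : a k < b q := by
      by_contra hle
      push_neg at hle
      have := (cnt_le_iff b h.bmono (a k) q (by omega)).mpr hle
      omega
    have hbr : b 1 - 2 ≤ b (b 1 - 2) := h.bmono.le_apply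
    omega
  have := (cnt_le_iff a h.hainc x (n + k) (by omega)).mp key
  omega

theorem lab (j n m : ℕ) (hj : 1 ≤ j) (hn : 1 ≤ n) (hm : 1 ≤ m)
    (heq : a j + b n = a m) : b j + a n ≤ b m := by
  have hanbn := h.ab_lt n hn
  have han : 1 ≤ a n := h.apos n hn
  -- Step A : j + b n ≤ m + n
  have stepA : j + b n ≤ m + n := by
    have h1 : cnt a (a j + b n) + cnt b (a j + b n) = a j + b n := h.cnt_add _
    have h2 : cnt b (a j + b n) ≤ cnt b (a j) + n := h.cnt_b_shift (a j) n
    have h3 : cnt b (a j) + j = a j := by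
      have := h.cnt_add (a j); rw [h.cnt_a_self j] at this; omega
    have h4 : cnt a (a j + b n) = m := by rw [heq, h.cnt_a_self]
    omega
  -- Step B : cnt b (a n - 1 + b j) < m
  have stepB : cnt b (a n - 1 + b j) < m := by
    have h2 : cnt b (a n - 1 + b j) ≤ cnt b (a n - 1) + j := h.cnt_b_shift (a n - 1) j
    have h3 : cnt a (a n - 1) + cnt b (a n - 1) = a n - 1 := h.cnt_add _
    have h4 : cnt a (a n - 1) + 1 = n := h.cnt_a_pred n hn
    omega
  -- Step C
  by_contra hlt
  push_neg at hlt
  have : b m ≤ a n - 1 + b j := by omega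
  have := (cnt_le_iff b h.bmono (a n - 1 + b j) m hm).mpr this
  omega

end SAC

theorem PPos2_zero (M : Set (ℕ × ℕ)) : PPos2 M (0, 0) := by
  rw [PPos2]
  intro r _ hne h1 h2
  exfalso
  apply hne
  simp only at h1 h2
  exact Prod.ext (by omega) (by omega)

def Mset (a b : ℕ → ℕ) : Set (ℕ × ℕ) :=
  {r | ∃ n, 1 ≤ n ∧ (r = (a n, b n) ∨ r = (b n, a n))}

namespace SAC
variable {a b : ℕ → ℕ} (h : SAC a b)
include h

theorem P_small (x y : ℕ) (h1 : x = 0 ∨ y < b 1) (h2 : y = 0 ∨ x < b 1) :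
    PPos2 (Mset a b) (x, y) := by
  rw [PPos2]
  intro r hr _ hle1 hle2
  exfalso
  obtain ⟨n, hn, hc | hc⟩ := hr <;> subst hc <;> simp only at hle1 hle2
  · have han : 1 ≤ a n := h.apos n hn
    have hbn : b 1 ≤ b n := h.bmono.monotone hn
    omega
  · have han : 1 ≤ a n := h.apos n hn
    have hbn : b 1 ≤ b n := h.bmono.monotone hn
    omega

theorem pswap_aux : ∀ N x y, x + y ≤ N → PPos2 (Mset a b) (x, y) → PPos2 (Mset a b) (y, x) := by
  intro N
  induction N with
  | zero =>
    intro x y hxy hP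
    have hx : x = 0 := by omega
    have hy : y = 0 := by omega
    subst hx; subst hy; exact hP
  | succ N ih =>
    intro x y hxy hP
    rw [PPos2] at hP ⊢
    intro r hr hne h1 h2 hQ
    simp only at h1 h2
    have hr' : (r.2, r.1) ∈ Mset a b := by
      obtain ⟨n, hn, hc | hc⟩ := hr
      · exact ⟨n, hn, Or.inr (by rw [hc])⟩
      · exact ⟨n, hn, Or.inl (by rw [hc])⟩
    have hne' : (r.2, r.1) ≠ ((0 : ℕ), (0 : ℕ)) := by
      intro e
      apply hne
      rw [Prod.ext_iff] at e ⊢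
      exact ⟨e.2, e.1⟩
    have hr1 : r.1 + r.2 ≠ 0 := by
      intro e
      apply hne
      rw [Prod.ext_iff]
      omega
    have key := hP (r.2, r.1) hr' hne' h2 h1
    apply key
    have : (y - r.1) + (x - r.2) ≤ N := by omega
    exact ih (y - r.1) (x - r.2) this hQ

theorem pswap (x y : ℕ) : PPos2 (Mset a b) (x, y) → PPos2 (Mset a b) (y, x) :=
  h.pswap_aux (x + y) x y le_rfl

theorem coreAA (m n : ℕ) (hn : 1 ≤ n) (hnm : n < m) :
    ¬ PPos2 (Mset a b) (a m - a n, b m - b n) := by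
  intro hP
  rw [PPos2] at hP
  set k := m - n with hk
  have hk1 : 1 ≤ k := by omega
  have hkn : k + n = m := by omega
  have hbk : b k + b n ≤ b m := by have := (h.hsup k n).1; rw [hkn] at this; exact this
  have hbup : b m < b k + b n + b 1 := by have := (h.hsup k n).2; rw [hkn] at this; exact this
  have han : a n < a m := h.hainc hnm
  have hb1 := h.b1_ge
  by_cases hcase : a k ≤ a m - a n
  · have hak1 : 1 ≤ a k := h.apos k hk1
    have hup : a m + 1 ≤ a n + a k + b 1 := by
      have := h.a_superadd_up n k hn hk1
      rw [show n + k = m by omega] at this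
      exact this
    apply hP (a k, b k) ⟨k, hk1, Or.inl rfl⟩ (by intro e; rw [Prod.ext_iff] at e; simp at e; omega)
      (by simpa using hcase) (by simp only; omega)
    apply h.P_small
    · right; simp only; omega
    · right; simp only; omega
  · push_neg at hcase
    obtain ⟨j, hj, hja⟩ | ⟨j, hj, hjb⟩ := h.cover (a m - a n) (by omega)
    · -- a j = a m - a n < a k
      have hjk : j < k := (h.hainc.lt_iff_lt).mp (by omega)
      have hbjk : b j < b k := h.bmono hjk
      have haj1 : 1 ≤ a j := h.apos j hj
      apply hP (a j, b j) ⟨j, hj, Or.inl rfl⟩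
        (by intro e; rw [Prod.ext_iff] at e; simp at e; omega)
        (by simp only; omega) (by simp only; omega)
      apply h.P_small
      · left; simp only; omega
      · right; simp only; omega
    · -- b j = a m - a n < a k
      have hab_k : a k < b k := h.ab_lt k hk1
      have hjk : j < k := (h.bmono.lt_iff_lt).mp (by omega)
      have hab_j : a j < b j := h.ab_lt j hj
      have hbjk : b j < b k := h.bmono hjk
      apply hP (b j, a j) ⟨j, hj, Or.inr rfl⟩
        (by intro e; rw [Prod.ext_iff] at e; simp at e; omega)
        (by simp only; omega) (by simp only; omega)
      apply h.P_small
      · left; simp only; omega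
      · right; simp only; omega

theorem coreAB (m n : ℕ) (hm : 1 ≤ m) (hn : 1 ≤ n) (hba : b n < a m) :
    ¬ PPos2 (Mset a b) (a m - b n, b m - a n) := by
  intro hP
  rw [PPos2] at hP
  have hab_m : a m < b m := h.ab_lt m hm
  have hab_n : a n < b n := h.ab_lt n hn
  have hb1 := h.b1_ge
  obtain ⟨j, hj, hja⟩ | ⟨j, hj, hjb⟩ := h.cover (a m - b n) (by omega)
  · -- a j = a m - b n
    have heq : a j + b n = a m := by omega
    have hlab : b j + a n ≤ b m := h.lab j n m hj hn hm heq
    have haj1 : 1 ≤ a j := h.apos j hj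
    apply hP (a j, b j) ⟨j, hj, Or.inl rfl⟩
      (by intro e; rw [Prod.ext_iff] at e; simp at e; omega)
      (by simp only; omega) (by simp only; omega)
    apply h.P_small
    · left; simp only; omega
    · right; simp only; omega
  · -- b j = a m - b n
    have hab_j : a j < b j := h.ab_lt j hj
    have haj : a j + a n < b m := by omega
    apply hP (b j, a j) ⟨j, hj, Or.inr rfl⟩
      (by intro e; rw [Prod.ext_iff] at e; simp at e; omega)
      (by simp only; omega) (by simp only; omega)
    apply h.P_small
    · left; simp only; omega
    · right; simp only; omega

theorem p1 (s t : ℕ × ℕ) (hs : ∃ n, s = (a n, b n) ∨ s = (b n, a n))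
    (ht : ∃ n, t = (a n, b n) ∨ t = (b n, a n))
    (hle1 : t.1 ≤ s.1) (hle2 : t.2 ≤ s.2) (hne : t ≠ s) :
    ¬ PPos2 (Mset a b) (s.1 - t.1, s.2 - t.2) := by
  obtain ⟨m, hsc⟩ := hs
  obtain ⟨n, htc⟩ := ht
  rcases Nat.eq_zero_or_pos n with hn0 | hn1
  · -- t = (0,0), difference is s itself
    subst hn0
    have ht0 : t = ((0:ℕ), (0:ℕ)) := by
      rcases htc with hc | hc <;> rw [hc, h.ha0, h.hb0]
    subst ht0
    have hm1 : 1 ≤ m := by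
      rcases Nat.eq_zero_or_pos m with h0 | h1
      · exfalso; apply hne; subst h0
        rcases hsc with hc | hc <;> rw [hc, h.ha0, h.hb0]
      · exact h1
    have hsne : s ≠ ((0:ℕ),(0:ℕ)) := fun e => hne e.symm
    intro hP
    rw [PPos2] at hP
    apply hP s (by
        rcases hsc with hc | hc
        · exact ⟨m, hm1, Or.inl hc⟩
        · exact ⟨m, hm1, Or.inr hc⟩)
      (by simpa using hsne) (by simp) (by simp)
    simp only [Nat.sub_zero, Nat.sub_self]
    exact h.P_small 0 0 (Or.inl rfl) (Or.inl rfl)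
  · rcases hsc with hc | hc <;> rcases htc with hc' | hc' <;> subst hc <;> subst hc' <;>
      simp only at hle1 hle2
    · -- AA
      have hnm : n < m := by
        rcases Nat.lt_trichotomy n m with hlt | heq | hgt
        · exact hlt
        · exact absurd (by rw [heq]) hne
        · exact absurd (h.hainc hgt) (by omega)
      exact h.coreAA m n hn1 hnm
    · -- t = (b n, a n) : AB
      have hm1 : 1 ≤ m := by
        by_contra h0
        have : m = 0 := by omega
        subst this
        rw [h.ha0] at hle1
        have := h.hbpos n hn1
        omega
      have hba : b n < a m := by
        rcases Nat.eq_or_lt_of_le hle1 with he | hl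
        · exact absurd he.symm (h.a_ne_b m n hm1 hn1)
        · exact hl
      exact h.coreAB m n hm1 hn1 hba
    · -- s = (b m, a m), t = (a n, b n) : swap of AB
      have hm1 : 1 ≤ m := by
        by_contra h0
        have : m = 0 := by omega
        subst this
        rw [h.ha0] at hle2
        have := h.hbpos n hn1
        omega
      have hba : b n < a m := by
        rcases Nat.eq_or_lt_of_le hle2 with he | hl
        · exact absurd he.symm (h.a_ne_b m n hm1 hn1)
        · exact hl
      intro hP
      exact h.coreAB m n hm1 hn1 hba (h.pswap _ _ hP)
    · -- BB : swap of AA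
      have hnm : n < m := by
        rcases Nat.lt_trichotomy n m with hlt | heq | hgt
        · exact hlt
        · exact absurd (by rw [heq]) hne
        · exact absurd (h.bmono hgt) (by omega)
      intro hP
      exact h.coreAA m n hn1 hnm (h.pswap _ _ hP)

end SAC

namespace SAC
variable {a b : ℕ → ℕ} (h : SAC a b)
include h

theorem sset_zero : ∃ n : ℕ, ((0:ℕ),(0:ℕ)) = (a n, b n) ∨ ((0:ℕ),(0:ℕ)) = (b n, a n) :=
  ⟨0, Or.inl (by rw [h.ha0, h.hb0])⟩

theorem main : ∀ N (p : ℕ × ℕ), p.1 + p.2 ≤ N →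
    (PPos2 {q | PPos2 (Mset a b) q ∧ q ≠ (0, 0)} p ↔
      ∃ n, p = (a n, b n) ∨ p = (b n, a n)) := by
  intro N
  induction N with
  | zero =>
    intro p hp
    have hp0 : p = ((0:ℕ),(0:ℕ)) := Prod.ext (by omega) (by omega)
    subst hp0
    constructor
    · intro _; exact h.sset_zero
    · intro _; exact PPos2_zero _
  | succ N ih =>
    intro p hp
    constructor
    · intro hstar
      by_contra hpS
      by_cases hPG : PPos2 (Mset a b) p
      · have hp0 : p ≠ ((0:ℕ),(0:ℕ)) := by
          intro e; apply hpS; rw [e]; exact h.sset_zero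
        rw [PPos2] at hstar
        apply hstar p ⟨hPG, hp0⟩ hp0 le_rfl le_rfl
        simp only [Nat.sub_self]
        exact PPos2_zero _
      · rw [PPos2] at hPG
        push_neg at hPG
        obtain ⟨r, hrM, hrne, hr1, hr2, hrP⟩ := hPG
        have hq0 : ((p.1 - r.1 : ℕ), (p.2 - r.2 : ℕ)) ≠ ((0:ℕ),(0:ℕ)) := by
          intro e
          rw [Prod.ext_iff] at e
          simp only at e
          have hpr : p = r := Prod.ext (by omega) (by omega)
          apply hpS
          rw [hpr]
          obtain ⟨n, _, hc | hc⟩ := hrM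
          · exact ⟨n, Or.inl hc⟩
          · exact ⟨n, Or.inr hc⟩
        rw [PPos2] at hstar
        have key := hstar (p.1 - r.1, p.2 - r.2) ⟨hrP, hq0⟩ hq0
          (Nat.sub_le _ _) (Nat.sub_le _ _)
        apply key
        show PPos2 _ (p.1 - (p.1 - r.1), p.2 - (p.2 - r.2))
        have he1 : p.1 - (p.1 - r.1) = r.1 := by omega
        have he2 : p.2 - (p.2 - r.2) = r.2 := by omega
        rw [he1, he2]
        have hne' : ¬(p.1 - r.1 = 0 ∧ p.2 - r.2 = 0) := by
          intro ⟨e1, e2⟩; exact hq0 (Prod.ext e1 e2)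
        have hrsum : r.1 + r.2 ≤ N := by omega
        apply (ih (r.1, r.2) hrsum).mpr
        obtain ⟨n, _, hc | hc⟩ := hrM
        · exact ⟨n, Or.inl (by rw [Prod.mk.eta, hc])⟩
        · exact ⟨n, Or.inr (by rw [Prod.mk.eta, hc])⟩
    · intro hpS
      rw [PPos2]
      rintro r ⟨hrPG, hrne⟩ _ hr1 hr2 hrP
      have hrsum0 : r.1 + r.2 ≠ 0 := by
        intro e; apply hrne; exact Prod.ext (by omega) (by omega)
      have hsum : (p.1 - r.1) + (p.2 - r.2) ≤ N := by omega
      have htS := (ih (p.1 - r.1, p.2 - r.2) hsum).mp hrP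
      have hne : ((p.1 - r.1 : ℕ), (p.2 - r.2 : ℕ)) ≠ p := by
        intro e; rw [Prod.ext_iff] at e; simp only at e
        apply hrne; exact Prod.ext (by omega) (by omega)
      have hnp := h.p1 p (p.1 - r.1, p.2 - r.2) hpS htS (Nat.sub_le _ _) (Nat.sub_le _ _) hne
      apply hnp
      show PPos2 _ (p.1 - (p.1 - r.1), p.2 - (p.2 - r.2))
      have he1 : p.1 - (p.1 - r.1) = r.1 := by omega
      have he2 : p.2 - (p.2 - r.2) = r.2 := by omega
      rw [he1, he2]
      exact Prod.mk.eta ▸ hrPG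

end SAC

theorem stmt_12 (a b : ℕ → ℕ)
    (ha0 : a 0 = 0) (hb0 : b 0 = 0) (ha1 : a 1 = 1)
    (hainc : StrictMono a)
    (hbpos : ∀ n, 1 ≤ n → 1 ≤ b n)
    (hcomp : ∀ k : ℕ, 1 ≤ k → ((∃ n, 1 ≤ n ∧ a n = k) ↔ ¬ ∃ n, 1 ≤ n ∧ b n = k))
    (hsup : ∀ m n : ℕ, b m + b n ≤ b (m + n) ∧ b (m + n) < b m + b n + b 1) :
    ∀ p : ℕ × ℕ,
      PPos2 {q | PPos2 {r | ∃ n, 1 ≤ n ∧ (r = (a n, b n) ∨ r = (b n, a n))} q ∧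
          q ≠ (0, 0)} p
        ↔ ∃ n : ℕ, p = (a n, b n) ∨ p = (b n, a n) := by
  intro p
  have h : SAC a b := ⟨ha0, hb0, ha1, hainc, hbpos, hcomp, hsup⟩
  exact h.main (p.1 + p.2) p le_rfl
end

section
/- For a b_1-SAC pair (a_n), (b_n) with m, n ≥ 1, if (x, y) = (a_{m+n}, b_{m+n}) ⊖ (b_n, a_n) (assuming b_n ≤ a_{m+n} and a_n ≤ b_{m+n}), then x ≤ a_m and y > b_m; in particular y > x. -/
open Finset

/-- count of indices k ≥ 1 with f k ≤ X (assuming k ≤ f k, so k ≤ X too) -/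
private def cnt14 (f : ℕ → ℕ) (X : ℕ) : ℕ :=
  ((Finset.Icc 1 X).filter (fun k => f k ≤ X)).card

private lemma cnt14_le (f : ℕ → ℕ) (X L : ℕ)
    (h : ∀ k, 1 ≤ k → f k ≤ X → k ≤ L) : cnt14 f X ≤ L := by
  have hsub : ((Finset.Icc 1 X).filter (fun k => f k ≤ X)) ⊆ Finset.Icc 1 L := by
    intro k hk
    simp only [mem_filter, mem_Icc] at hk ⊢
    exact ⟨hk.1.1, h k hk.1.1 hk.2⟩
  calc cnt14 f X ≤ (Finset.Icc 1 L).card := Finset.card_le_card hsub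
    _ = L := by simp [Nat.card_Icc]

private lemma cnt14_self (f : ℕ → ℕ) (hf : StrictMono f) (hfe : ∀ k, k ≤ f k) (m : ℕ) :
    cnt14 f (f m) = m := by
  have : ((Finset.Icc 1 (f m)).filter (fun k => f k ≤ f m)) = Finset.Icc 1 m := by
    ext k
    simp only [mem_filter, mem_Icc]
    constructor
    · rintro ⟨⟨h1, _⟩, h2⟩
      exact ⟨h1, (hf.le_iff_le).mp h2⟩
    · rintro ⟨h1, h2⟩
      exact ⟨⟨h1, le_trans h2 (hfe m)⟩, hf.monotone h2⟩
  simp [cnt14, this, Nat.card_Icc]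

private lemma cnt14_ge_imp (f : ℕ → ℕ) (hf : StrictMono f) (X t : ℕ) (ht : 1 ≤ t)
    (h : t ≤ cnt14 f X) : f t ≤ X := by
  by_contra hc
  push_neg at hc
  have : cnt14 f X ≤ t - 1 := by
    apply cnt14_le
    intro k hk1 hk2
    have : k < t := hf.lt_iff_lt.mp (lt_of_le_of_lt hk2 hc)
    omega
  omega

private lemma cnt14_count (a b : ℕ → ℕ) (ha : ∀ k, 1 ≤ k → 1 ≤ a k) (hb : ∀ k, k ≤ b k)
    (ha' : ∀ k, k ≤ a k)
    (hai : Function.Injective a) (hbi : Function.Injective b)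
    (hcomp : ∀ k : ℕ, 1 ≤ k → ((∃ n, 1 ≤ n ∧ a n = k) ↔ ¬ ∃ n, 1 ≤ n ∧ b n = k))
    (N : ℕ) : cnt14 a N + cnt14 b N = N := by
  classical
  set S := (Finset.Icc 1 N).filter (fun k => a k ≤ N) with hS
  set T := (Finset.Icc 1 N).filter (fun k => b k ≤ N) with hT
  have hdisj : Disjoint (S.image a) (T.image b) := by
    rw [Finset.disjoint_left]
    rintro v hv hw
    simp only [mem_image, mem_filter, mem_Icc, hS, hT] at hv hw
    obtain ⟨k, ⟨⟨hk1, _⟩, hk2⟩, rfl⟩ := hv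
    obtain ⟨j, ⟨⟨hj1, _⟩, hj2⟩, hj3⟩ := hw
    have hv1 : 1 ≤ a k := ha k hk1
    have := (hcomp (a k) hv1).mp ⟨k, hk1, rfl⟩
    exact this ⟨j, hj1, hj3⟩
  have himg : S.image a ∪ T.image b = Finset.Icc 1 N := by
    ext v
    simp only [mem_union, mem_image, mem_filter, mem_Icc, hS, hT]
    constructor
    · rintro (⟨k, ⟨⟨hk1, _⟩, hk2⟩, rfl⟩ | ⟨k, ⟨⟨hk1, _⟩, hk2⟩, rfl⟩)
      · exact ⟨ha k hk1, hk2⟩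
      · exact ⟨le_trans hk1 (hb k), hk2⟩
    · rintro ⟨hv1, hv2⟩
      by_cases h : ∃ j, 1 ≤ j ∧ a j = v
      · obtain ⟨j, hj1, hj2⟩ := h
        exact Or.inl ⟨j, ⟨⟨hj1, le_trans (le_trans (ha' j) hj2.le) hv2⟩,
          hj2.le.trans hv2⟩, hj2⟩
      · have hbv : ∃ j, 1 ≤ j ∧ b j = v := by
          by_contra hnb
          exact h ((hcomp v hv1).mpr hnb)
        obtain ⟨j, hj1, hj2⟩ := hbv
        exact Or.inr ⟨j, ⟨⟨hj1, le_trans (le_trans (hb j) hj2.le) hv2⟩,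
          hj2.le.trans hv2⟩, hj2⟩
  have hcard : (S.image a ∪ T.image b).card = N := by
    rw [himg]; simp [Nat.card_Icc]
  rw [Finset.card_union_of_disjoint hdisj,
    Finset.card_image_of_injective _ hai, Finset.card_image_of_injective _ hbi] at hcard
  exact hcard

/-- shift bound: cnt b (c + b n) ≤ n + cnt b c -/
private lemma cnt14_shift (b : ℕ → ℕ) (hb : ∀ k, k ≤ b k)
    (hsup : ∀ m n : ℕ, b m + b n ≤ b (m + n)) (c n : ℕ) :
    cnt14 b (c + b n) ≤ n + cnt14 b c := by
  classical
  have hsub : ((Finset.Icc 1 (c + b n)).filter (fun k => b k ≤ c + b n)) ⊆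
      Finset.Icc 1 n ∪ ((Finset.Icc 1 c).filter (fun k => b k ≤ c)).image (· + n) := by
    intro j hj
    simp only [mem_filter, mem_Icc, mem_union, mem_image] at hj ⊢
    obtain ⟨⟨hj1, _⟩, hj2⟩ := hj
    by_cases hjn : j ≤ n
    · exact Or.inl ⟨hj1, hjn⟩
    · push_neg at hjn
      refine Or.inr ⟨j - n, ⟨⟨?_, ?_⟩, ?_⟩, by omega⟩
      · omega
      · have h1 := hsup (j - n) n
        have h2 : j - n + n = j := by omega
        rw [h2] at h1
        have := hb (j - n)
        omega
      · have h1 := hsup (j - n) n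
        have h2 : j - n + n = j := by omega
        rw [h2] at h1
        omega
  calc cnt14 b (c + b n) ≤ _ := Finset.card_le_card hsub
    _ ≤ (Finset.Icc 1 n).card + _ := Finset.card_union_le _ _
    _ ≤ n + cnt14 b c := by
        simp only [Nat.card_Icc, Nat.add_sub_cancel]
        exact Nat.add_le_add_left (Finset.card_image_le) n

theorem stmt_14 (a b : ℕ → ℕ)
    (ha0 : a 0 = 0) (hb0 : b 0 = 0) (ha1 : a 1 = 1)
    (hainc : StrictMono a)
    (hbpos : ∀ n, 1 ≤ n → 1 ≤ b n)
    (hcomp : ∀ k : ℕ, 1 ≤ k → ((∃ n, 1 ≤ n ∧ a n = k) ↔ ¬ ∃ n, 1 ≤ n ∧ b n = k))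
    (hsup : ∀ m n : ℕ, b m + b n ≤ b (m + n) ∧ b (m + n) < b m + b n + b 1)
    (m n : ℕ) (hm : 1 ≤ m) (hn : 1 ≤ n)
    (hx : b n ≤ a (m + n)) (hy : a n ≤ b (m + n)) :
    a (m + n) - b n ≤ a m ∧ b m < b (m + n) - a n ∧
      a (m + n) - b n < b (m + n) - a n := by
  have hsup' : ∀ m n : ℕ, b m + b n ≤ b (m + n) := fun m n => (hsup m n).1
  -- b 1 ≥ 2
  have hb1 : 2 ≤ b 1 := by
    have h1 := (hcomp 1 le_rfl).mp ⟨1, le_rfl, ha1⟩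
    have h2 := hbpos 1 le_rfl
    rcases Nat.lt_or_ge (b 1) 2 with h | h
    · exact absurd ⟨1, le_rfl, by omega⟩ h1
    · exact h
  -- b k ≥ 2k
  have hb2k : ∀ k, 2 * k ≤ b k := by
    intro k
    induction k with
    | zero => omega
    | succ k ih =>
      have := hsup' k 1
      omega
  have hbk : ∀ k, k ≤ b k := fun k => by have := hb2k k; omega
  have hbinc : StrictMono b := by
    apply strictMono_nat_of_lt_succ
    intro k
    have := hsup' k 1
    omega
  have hak : ∀ k, k ≤ a k := fun k => hainc.le_apply
  have ha1k : ∀ k, 1 ≤ k → 1 ≤ a k := fun k hk => le_trans hk (hak k)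
  have hcount := cnt14_count a b ha1k hbk hak hainc.injective hbinc.injective hcomp
  -- a k ≤ 2k - 1 for k ≥ 1
  have haub : ∀ k, 1 ≤ k → a k ≤ 2 * k - 1 := by
    intro k hk
    have hB : cnt14 b (2 * k - 1) ≤ k - 1 := by
      apply cnt14_le
      intro j hj1 hj2
      have := hb2k j
      omega
    have hA : k ≤ cnt14 a (2 * k - 1) := by
      have := hcount (2 * k - 1)
      omega
    exact cnt14_ge_imp a hainc _ k hk hA
  -- cnt b (a j) = a j - j
  have hcb : ∀ j, cnt14 b (a j) = a j - j := by
    intro j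
    have h1 := hcount (a j)
    have h2 := cnt14_self a hainc hak j
    omega
  -- Claim 1 : a (m+n) ≤ a m + b n
  have claim1 : a (m + n) ≤ a m + b n := by
    have hBb : cnt14 b (a m + b n) ≤ n + (a m - m) := by
      have := cnt14_shift b hbk hsup' (a m) n
      have := hcb m
      omega
    have hAb : m + n ≤ cnt14 a (a m + b n) := by
      have := hcount (a m + b n)
      have := hak m
      have := hb2k n
      omega
    exact cnt14_ge_imp a hainc _ (m + n) (by omega) hAb
  -- Claim 2 : a n + b m < b (m+n)
  have claim2 : a n + b m < b (m + n) := by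
    by_contra hc
    push_neg at hc
    have hBge : m + n ≤ cnt14 b (a n + b m) := by
      have hsub : Finset.Icc 1 (m + n) ⊆
          (Finset.Icc 1 (a n + b m)).filter (fun k => b k ≤ a n + b m) := by
        intro j hj
        simp only [mem_Icc, mem_filter] at hj ⊢
        have hbj : b j ≤ b (m + n) := hbinc.monotone hj.2
        have := hbk j
        exact ⟨⟨hj.1, by omega⟩, by omega⟩
      have := Finset.card_le_card hsub
      simpa [cnt14, Nat.card_Icc] using this
    have hBle : cnt14 b (a n + b m) ≤ m + (a n - n) := by
      have := cnt14_shift b hbk hsup' (a n) m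
      have := hcb n
      omega
    have := haub n hn
    have := hak n
    omega
  have him : m ≤ a m := hak m
  have haum := haub m hm
  have := hb2k m
  refine ⟨by omega, by omega, by omega⟩
end

section
/- For a b_1-SAC pair (a_n), (b_n) and m, n ≥ 1, setting x = a_{m+n} - a_n and y = b_{m+n} - b_n, one has x ≤ a_m + 1 and b_m ≤ y < b_m + b_1. -/
theorem stmt_15 (a b : ℕ → ℕ)
    (ha0 : a 0 = 0) (hb0 : b 0 = 0) (ha1 : a 1 = 1)
    (hainc : StrictMono a)
    (hbpos : ∀ n, 1 ≤ n → 1 ≤ b n)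
    (hcomp : ∀ k : ℕ, 1 ≤ k → ((∃ n, 1 ≤ n ∧ a n = k) ↔ ¬ ∃ n, 1 ≤ n ∧ b n = k))
    (hsup : ∀ m n : ℕ, b m + b n ≤ b (m + n) ∧ b (m + n) < b m + b n + b 1) :
    ∀ m n : ℕ, 1 ≤ m → 1 ≤ n →
      a (m + n) - a n ≤ a m + 1 ∧ b m ≤ b (m + n) - b n ∧
        b (m + n) - b n < b m + b 1 := by
  have hbmono : StrictMono b := strictMono_nat_of_lt_succ (fun k => by
    have h := (hsup k 1).1
    have hb1 := hbpos 1 le_rfl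
    omega)
  have hble : ∀ j, j ≤ b j := fun j => hbmono.le_apply
  have hale : ∀ j, j ≤ a j := fun j => hainc.le_apply
  have ha1le : ∀ j, 1 ≤ j → 1 ≤ a j := fun j hj => by
    have := hainc.monotone hj; omega
  -- counting lemma: if a J ≤ X < a (J+1) and b t ≤ X < b (t+1) then J + t = X
  have count : ∀ X J t : ℕ, a J ≤ X → X < a (J+1) → b t ≤ X → X < b (t+1) → J + t = X := by
    intro X J t haJ haJ1 hbt hbt1
    have key : Finset.Icc 1 X = ((Finset.Icc 1 J).image a) ∪ ((Finset.Icc 1 t).image b) := by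
      ext k
      simp only [Finset.mem_union, Finset.mem_image, Finset.mem_Icc]
      constructor
      · rintro ⟨hk1, hkX⟩
        by_cases hb : ∃ n, 1 ≤ n ∧ b n = k
        · obtain ⟨i, hi1, hik⟩ := hb
          right
          refine ⟨i, ⟨hi1, ?_⟩, hik⟩
          by_contra h
          push_neg at h
          have : b (t+1) ≤ b i := hbmono.monotone h
          omega
        · obtain ⟨j, hj1, hjk⟩ := (hcomp k hk1).mpr hb
          left
          refine ⟨j, ⟨hj1, ?_⟩, hjk⟩
          by_contra h
          push_neg at h
          have : a (J+1) ≤ a j := hainc.monotone h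
          omega
      · rintro (⟨j, ⟨hj1, hjJ⟩, rfl⟩ | ⟨i, ⟨hi1, hit⟩, rfl⟩)
        · exact ⟨ha1le j hj1, le_trans (hainc.monotone hjJ) haJ⟩
        · exact ⟨hbpos i hi1, le_trans (hbmono.monotone hit) hbt⟩
    have hdisj : Disjoint ((Finset.Icc 1 J).image a) ((Finset.Icc 1 t).image b) := by
      rw [Finset.disjoint_left]
      rintro k hk hk'
      simp only [Finset.mem_image, Finset.mem_Icc] at hk hk'
      obtain ⟨j, ⟨hj1, _⟩, hjk⟩ := hk
      obtain ⟨i, ⟨hi1, _⟩, hik⟩ := hk'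
      have hk1 : 1 ≤ k := hjk ▸ ha1le j hj1
      exact ((hcomp k hk1).mp ⟨j, hj1, hjk⟩) ⟨i, hi1, hik⟩
    have hcard := congrArg Finset.card key
    rw [Finset.card_union_of_disjoint hdisj,
        Finset.card_image_of_injective _ hainc.injective,
        Finset.card_image_of_injective _ hbmono.injective] at hcard
    simp [Nat.card_Icc] at hcard
    omega
  -- spec of counting for b and a
  have cntb : ∀ Y : ℕ, ∃ r, b r ≤ Y ∧ Y < b (r + 1) := by
    intro Y
    refine ⟨Nat.findGreatest (fun j => b j ≤ Y) Y, ?_, ?_⟩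
    · exact Nat.findGreatest_spec (P := fun j => b j ≤ Y) (Nat.zero_le Y) (by omega)
    · by_cases hc : Nat.findGreatest (fun j => b j ≤ Y) Y + 1 ≤ Y
      · have h2 : ¬ (b (Nat.findGreatest (fun j => b j ≤ Y) Y + 1) ≤ Y) :=
          Nat.findGreatest_is_greatest (P := fun j => b j ≤ Y) (Nat.lt_succ_self _) hc
        omega
      · have := hble (Nat.findGreatest (fun j => b j ≤ Y) Y + 1)
        omega
  have cnta : ∀ Y : ℕ, ∃ r, a r ≤ Y ∧ Y < a (r + 1) := by
    intro Y
    refine ⟨Nat.findGreatest (fun j => a j ≤ Y) Y, ?_, ?_⟩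
    · exact Nat.findGreatest_spec (P := fun j => a j ≤ Y) (Nat.zero_le Y) (by omega)
    · by_cases hc : Nat.findGreatest (fun j => a j ≤ Y) Y + 1 ≤ Y
      · have h2 : ¬ (a (Nat.findGreatest (fun j => a j ≤ Y) Y + 1) ≤ Y) :=
          Nat.findGreatest_is_greatest (P := fun j => a j ≤ Y) (Nat.lt_succ_self _) hc
        omega
      · have := hale (Nat.findGreatest (fun j => a j ≤ Y) Y + 1)
        omega
  intro m n hm hn
  -- key subadditivity: a (m+n) ≤ a m + a n + 1
  have hadd : a (m + n) ≤ a m + a n + 1 := by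
    obtain ⟨p, hp1, hp2⟩ := cntb (a m)
    obtain ⟨q, hq1, hq2⟩ := cntb (a n)
    have hmm : m + p = a m := count (a m) m p le_rfl (hainc (Nat.lt_succ_self m)) hp1 hp2
    have hnn : n + q = a n := count (a n) n q le_rfl (hainc (Nat.lt_succ_self n)) hq1 hq2
    obtain ⟨r, hr1, hr2⟩ := cntb (a m + a n + 1)
    obtain ⟨J, hJ1, hJ2⟩ := cnta (a m + a n + 1)
    have hJr : J + r = a m + a n + 1 := count (a m + a n + 1) J r hJ1 hJ2 hr1 hr2
    have hrle : r ≤ p + q + 1 := by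
      by_contra hcon
      push_neg at hcon
      have h1 : b (p+q+2) ≤ b r := hbmono.monotone (by omega)
      have h2 : b (p+1) + b (q+1) ≤ b ((p+1) + (q+1)) := (hsup (p+1) (q+1)).1
      have h3 : (p+1) + (q+1) = p+q+2 := by ring
      rw [h3] at h2
      omega
    have hJge : m + n ≤ J := by omega
    have : a (m+n) ≤ a J := hainc.monotone hJge
    omega
  have h1 := (hsup m n).1
  have h2 := (hsup m n).2
  have h3 := (hsup n 0).1
  simp [hb0] at h3
  refine ⟨by omega, by omega, by omega⟩
end

section
/- Let a_n = ⌊3n/2⌋ and b_n = 3n - 1 for n ≥ 1, with a_0 = b_0 = 0. Then (a_n) and (b_n) form a b_1-SAC pair: a_1 = 1, a is strictly increasing, the sequences are complementary, and b is 2-superadditive (b_m + b_n ≤ b_{m+n} < b_m + b_n + 2 for all m, n). -/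
theorem stmt_16 (a b : ℕ → ℕ)
    (ha : ∀ n, a n = 3 * n / 2) (hb : ∀ n, b n = 3 * n - 1) :
    a 1 = 1 ∧ StrictMono a ∧
    (∀ k : ℕ, 1 ≤ k → ((∃ n, 1 ≤ n ∧ a n = k) ↔ ¬ ∃ n, 1 ≤ n ∧ b n = k)) ∧
    (∀ m n : ℕ, b m + b n ≤ b (m + n) ∧ b (m + n) < b m + b n + 2) := by
  refine ⟨by simp [ha], ?_, ?_, ?_⟩
  · apply strictMono_nat_of_lt_succ
    intro n
    rw [ha, ha]
    omega
  · intro k hk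
    constructor
    · rintro ⟨n, hn, hak⟩ ⟨m, hm, hbk⟩
      rw [ha] at hak; rw [hb] at hbk
      omega
    · intro h
      push_neg at h
      refine ⟨2 * (k / 3) + k % 3, ?_, ?_⟩ <;>
      · have h1 := h ((k + 1) / 3)
        rw [hb] at h1
        (try rw [ha]); omega
    
  · intro m n
    rw [hb, hb, hb]
    omega
end

section
/- There is no invariant subtraction game G on ℕ² with P(G) = {(0,0)} ∪ {(a_n,b_n),(b_n,a_n) : n≥1} for any complementary pair beginning (a_1,b_1)=(1,3), (a_2,b_2)=(2,7), (a_3,b_3)=(4,13); indeed, for such G the facts (2,7) ∈ P(G), (4,13) ∈ P(G) and (2,6) ∈ N(G) are contradictory with invariance, since (4,13) ⊖ (2,7) = (2,6) and (2,6) has no option to a P-position. -/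
theorem stmt_17 (a b : ℕ → ℕ)
    (ha0 : a 0 = 0) (hb0 : b 0 = 0)
    (ha1 : a 1 = 1) (hb1 : b 1 = 3) (ha2 : a 2 = 2) (hb2 : b 2 = 7)
    (ha3 : a 3 = 4) (hb3 : b 3 = 13)
    (hapos : ∀ n, 1 ≤ n → 1 ≤ a n) (hbpos : ∀ n, 1 ≤ n → 1 ≤ b n)
    (hcomp : ∀ k : ℕ, 1 ≤ k → ((∃ n, 1 ≤ n ∧ a n = k) ↔ ¬ ∃ n, 1 ≤ n ∧ b n = k))
    (hainj : ∀ m n, 1 ≤ m → 1 ≤ n → a m = a n → m = n)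
    (hbinj : ∀ m n, 1 ≤ m → 1 ≤ n → b m = b n → m = n) :
    ¬ ∃ M : Set (ℕ × ℕ), (0, 0) ∉ M ∧
      ∀ p : ℕ × ℕ, PPos2 M p ↔ ∃ n : ℕ, p = (a n, b n) ∨ p = (b n, a n) := by
  rintro ⟨M, hM0, hG⟩
  -- small b's are not 1 or 2 (those are a-values)
  have hbne1 : ∀ n, 1 ≤ n → b n ≠ 1 := by
    intro n hn h
    exact ((hcomp 1 le_rfl).1 ⟨1, le_rfl, ha1⟩) ⟨n, hn, h⟩
  have hbne2 : ∀ n, 1 ≤ n → b n ≠ 2 := by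
    intro n hn h
    exact ((hcomp 2 one_le_two).1 ⟨2, one_le_two, ha2⟩) ⟨n, hn, h⟩
  have hP00 : PPos2 M (0, 0) := (hG (0, 0)).2 ⟨0, Or.inl (by simp [ha0, hb0])⟩
  have hP13 : PPos2 M (1, 3) := (hG (1, 3)).2 ⟨1, Or.inl (by simp [ha1, hb1])⟩
  have hP27 : PPos2 M (2, 7) := (hG (2, 7)).2 ⟨2, Or.inl (by simp [ha2, hb2])⟩
  have hP413 : PPos2 M (4, 13) := (hG (4, 13)).2 ⟨3, Or.inl (by simp [ha3, hb3])⟩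
  -- (2,6) is not a P-position
  have hN26 : ¬ PPos2 M (2, 6) := by
    intro h
    obtain ⟨n, hn | hn⟩ := (hG (2, 6)).1 h
    · have h1 : a n = 2 := (congrArg Prod.fst hn).symm
      have h2 : b n = 6 := (congrArg Prod.snd hn).symm
      have hn1 : 1 ≤ n := by rcases Nat.eq_zero_or_pos n with rfl | h; omega; omega
      have h3 : n = 2 := hainj n 2 hn1 one_le_two (by omega)
      rw [h3] at h2; omega
    · have h1 : b n = 2 := (congrArg Prod.fst hn).symm
      have hn1 : 1 ≤ n := by rcases Nat.eq_zero_or_pos n with rfl | h; omega; omega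
      exact hbne2 n hn1 h1
  -- so there is a move from (2,6) to a P-position
  rw [PPos2] at hN26
  push_neg at hN26
  obtain ⟨r, hrM, hr0, hr1, hr2, hrP⟩ := hN26
  -- identify the target P-position: (0,0) or (1,3)
  obtain ⟨n, hn | hn⟩ := (hG _).1 hrP
  · have h1 : a n = 2 - r.1 := (congrArg Prod.fst hn).symm
    have h2 : b n = 6 - r.2 := (congrArg Prod.snd hn).symm
    rcases Nat.eq_zero_or_pos n with rfl | hn1
    · -- target (0,0): move r = (2,6)
      have hr : r = (2, 6) := by
        have : r = (r.1, r.2) := rfl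
        rw [this]; simp only [Prod.mk.injEq]; omega
      rw [PPos2] at hP413
      exact hP413 r hrM hr0 (by rw [hr]; norm_num) (by rw [hr]; norm_num)
        (by rw [hr]; norm_num; exact hP27)
    · -- target (1,3): move r = (1,3)
      have han : a n ≤ 2 := by omega
      have han1 : 1 ≤ a n := hapos n hn1
      have : a n = 1 := by
        rcases Nat.lt_or_ge (a n) 2 with h | h
        · omega
        · exfalso; have h3 : n = 2 := hainj n 2 hn1 one_le_two (by omega)
          rw [h3] at h2; omega
      have hne : n = 1 := hainj n 1 hn1 le_rfl (by omega)
      have hr : r = (1, 3) := by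
        have : r = (r.1, r.2) := rfl
        rw [this]; simp only [Prod.mk.injEq]
        rw [hne] at h1 h2; omega
      rw [PPos2] at hP13
      exact hP13 r hrM hr0 (by rw [hr]) (by rw [hr])
        (by rw [hr]; norm_num; exact hP00)
  · have h1 : b n = 2 - r.1 := (congrArg Prod.fst hn).symm
    have h2 : a n = 6 - r.2 := (congrArg Prod.snd hn).symm
    rcases Nat.eq_zero_or_pos n with rfl | hn1
    · -- target (0,0): move r = (2,6)
      have hr : r = (2, 6) := by
        have : r = (r.1, r.2) := rfl
        rw [this]; simp only [Prod.mk.injEq]; omega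
      rw [PPos2] at hP413
      exact hP413 r hrM hr0 (by rw [hr]; norm_num) (by rw [hr]; norm_num)
        (by rw [hr]; norm_num; exact hP27)
    · have := hbpos n hn1
      have := hbne1 n hn1
      have := hbne2 n hn1
      omega
end
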